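/- arXiv:2509.07598 — 4 statements merged into one kernel-verified Lean document; each statement's English description precedes it below -/
import Mathlib

section
/- The improper integral over (0, ∞) of ln((1 + e^{-x})/(1 - e^{-x})) with respect to x equals π²/4. -/
/-!
For `x > 0` put `t = e^{-x} ∈ (0, 1)`; then `log ((1 + t) / (1 - t)) = ∑ 2 t^{2k+1} / (2k+1)`, so the
integrand is `∑ 2 e^{-(2k+1)x} / (2k+1)`. The terms are nonnegative, so the series may be integrated
term by term, giving `2 ∑ 1 / (2k+1)² = 2 · π² / 8`.
-/

open Real MeasureTheory Set

theorem hasSum_one_div_odd_sq : HasSum (fun k : ℕ => 1 / (2 * k + 1 : ℝ) ^ 2) (π ^ 2 / 8) := by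
  have h_even : HasSum (fun k : ℕ => 1 / ((2 * k : ℕ) : ℝ) ^ 2) (π ^ 2 / 24) := by
    rw [show π ^ 2 / 24 = 1 / 4 * (π ^ 2 / 6) by ring]
    refine (hasSum_zeta_two.mul_left _).congr_fun fun k => ?_
    push_cast; ring
  obtain ⟨s, h_odd⟩ : Summable fun k : ℕ => 1 / ((2 * k + 1 : ℕ) : ℝ) ^ 2 :=
    hasSum_zeta_two.summable.comp_injective fun i j h => by simpa using h
  obtain rfl : s = π ^ 2 / 8 := by
    have := hasSum_zeta_two.unique
      (HasSum.even_add_odd (f := fun n : ℕ => 1 / (n : ℝ) ^ 2) h_even h_odd)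
    linarith
  exact_mod_cast h_odd

theorem integral_exp_neg_mul_Ioi_zero {b : ℝ} (hb : 0 < b) :
    ∫ x in Ioi (0 : ℝ), exp (-b * x) = 1 / b := by
  simpa [neg_div, div_neg] using integral_exp_mul_Ioi (neg_neg_of_pos hb) 0

theorem hasSum_log_one_add_div_one_sub {t : ℝ} (ht : |t| < 1) :
    HasSum (fun k : ℕ => 2 * (1 / (2 * k + 1)) * t ^ (2 * k + 1)) (log ((1 + t) / (1 - t))) := by
  obtain ⟨h_lo, h_hi⟩ := abs_lt.mp ht
  rw [log_div (by linarith) (by linarith)]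
  exact hasSum_log_sub_log_of_abs_lt_one ht

theorem hasSum_log_one_add_exp_neg_div_one_sub_exp_neg {x : ℝ} (hx : 0 < x) :
    HasSum (fun k : ℕ => 2 / (2 * k + 1) * exp (-(2 * k + 1) * x))
      (log ((1 + exp (-x)) / (1 - exp (-x)))) := by
  have ht : |exp (-x)| < 1 := by
    rw [abs_of_pos (exp_pos _), exp_lt_one_iff]; linarith
  refine (hasSum_log_one_add_div_one_sub ht).congr_fun fun k => ?_
  rw [← exp_nat_mul]
  push_cast
  ring_nf

theorem integral_tsum_of_nonneg_of_hasSum {α ι : Type*} [MeasurableSpace α] [Countable ι]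
    {μ : Measure α} {F : ι → α → ℝ} {I : ℝ} (hF_nonneg : ∀ i, 0 ≤ᵐ[μ] F i)
    (hF_int : ∀ i, Integrable (F i) μ) (hF_sum : HasSum (fun i => ∫ a, F i a ∂μ) I) :
    ∫ a, ∑' i, F i a ∂μ = I := by
  have h_norm : ∀ i, ∫ a, ‖F i a‖ ∂μ = ∫ a, F i a ∂μ := fun i =>
    integral_congr_ae <| (hF_nonneg i).mono fun a ha => Real.norm_of_nonneg ha
  refine (hasSum_integral_of_summable_integral_norm hF_int ?_).unique hF_sum
  simpa only [h_norm] using hF_sum.summable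

theorem integral_fundamental_form :
    ∫ x in Set.Ioi (0:ℝ), Real.log ((1 + Real.exp (-x)) / (1 - Real.exp (-x)))
      = Real.pi ^ 2 / 4 := by
  set F : ℕ → ℝ → ℝ := fun k x => 2 / (2 * k + 1) * exp (-(2 * k + 1) * x)
  have h_rate : ∀ k : ℕ, (0 : ℝ) < 2 * k + 1 := fun k => by positivity
  have hF_integral : ∀ k : ℕ, ∫ x in Ioi 0, F k x = 2 * (1 / (2 * k + 1 : ℝ) ^ 2) := fun k => by
    rw [integral_const_mul, integral_exp_neg_mul_Ioi_zero (h_rate k)]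
    field_simp
  calc ∫ x in Ioi 0, log ((1 + exp (-x)) / (1 - exp (-x)))
      = ∫ x in Ioi 0, ∑' k, F k x := setIntegral_congr_fun measurableSet_Ioi fun x hx =>
        (hasSum_log_one_add_exp_neg_div_one_sub_exp_neg hx).tsum_eq.symm
    _ = π ^ 2 / 4 := by
      refine integral_tsum_of_nonneg_of_hasSum (fun k => ae_of_all _ fun x => by positivity)
        (fun k => (exp_neg_integrableOn_Ioi 0 (h_rate k)).const_mul _) ?_
      rw [show π ^ 2 / 4 = 2 * (π ^ 2 / 8) by ring]
      exact (hasSum_one_div_odd_sq.mul_left 2).congr_fun hF_integral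
end

section
/- The improper integral over (0, ∞) of ln(1/(1 - e^{-x})) with respect to x equals π²/6. -/
/-!
Expanding `-log (1 - t) = ∑ tⁿ⁺¹ / (n + 1)` at `t = e⁻ˣ` and integrating term by term (all terms
are nonnegative) gives `∑ 1 / (n + 1)²`, since `∫₀^∞ e^{-(n+1)x} dx = 1 / (n + 1)`; this is
`ζ(2) = π² / 6`.
-/

open Real MeasureTheory Set

theorem hasSum_one_div_nat_add_one_sq :
    HasSum (fun n : ℕ => 1 / ((n : ℝ) + 1) ^ 2) (π ^ 2 / 6) := by
  simpa using (hasSum_nat_add_iff' 1).mpr hasSum_zeta_two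

theorem hasSum_exp_neg_pow_succ_div {x : ℝ} (hx : 0 < x) :
    HasSum (fun n : ℕ => exp (-x) ^ (n + 1) / (n + 1)) (log (1 / (1 - exp (-x)))) := by
  have h : |exp (-x)| < 1 := by
    rw [abs_of_pos (exp_pos _), exp_lt_one_iff]
    exact neg_neg_of_pos hx
  simpa only [one_div, log_inv] using hasSum_pow_div_log_of_abs_lt_one h

theorem exp_neg_pow_succ_div (n : ℕ) (x : ℝ) :
    exp (-x) ^ (n + 1) / (n + 1) = ((n : ℝ) + 1)⁻¹ * exp (-((n : ℝ) + 1) * x) := by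
  rw [← exp_nat_mul]
  push_cast
  ring_nf

theorem integrableOn_exp_neg_pow_succ_div (n : ℕ) :
    IntegrableOn (fun x : ℝ => exp (-x) ^ (n + 1) / (n + 1)) (Ioi 0) := by
  simp only [exp_neg_pow_succ_div]
  exact (exp_neg_integrableOn_Ioi 0 n.cast_add_one_pos).const_mul _

theorem integral_exp_neg_pow_succ_div (n : ℕ) :
    ∫ x in Ioi (0 : ℝ), exp (-x) ^ (n + 1) / (n + 1) = 1 / ((n : ℝ) + 1) ^ 2 := by
  have hn : -((n : ℝ) + 1) < 0 := neg_neg_of_pos n.cast_add_one_pos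
  simp only [exp_neg_pow_succ_div]
  rw [integral_const_mul, integral_exp_mul_Ioi hn, mul_zero, exp_zero]
  field_simp

theorem integral_degenerate_form :
    ∫ x in Set.Ioi (0:ℝ), Real.log (1 / (1 - Real.exp (-x)))
      = Real.pi ^ 2 / 6 := by
  have h_norm (n : ℕ) : ∫ x in Ioi (0 : ℝ), ‖exp (-x) ^ (n + 1) / (n + 1)‖
      = 1 / ((n : ℝ) + 1) ^ 2 := by
    have h_nonneg (x : ℝ) : ‖exp (-x) ^ (n + 1) / (n + 1)‖ = exp (-x) ^ (n + 1) / (n + 1) :=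
      Real.norm_of_nonneg (by positivity)
    simp_rw [h_nonneg]
    exact integral_exp_neg_pow_succ_div n
  calc ∫ x in Ioi (0 : ℝ), log (1 / (1 - exp (-x)))
      = ∫ x in Ioi (0 : ℝ), ∑' n : ℕ, exp (-x) ^ (n + 1) / (n + 1) :=
        setIntegral_congr_fun measurableSet_Ioi fun x hx =>
          (hasSum_exp_neg_pow_succ_div hx).tsum_eq.symm
    _ = ∑' n : ℕ, ∫ x in Ioi (0 : ℝ), exp (-x) ^ (n + 1) / (n + 1) :=
        (integral_tsum_of_summable_integral_norm integrableOn_exp_neg_pow_succ_div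
          (by simpa only [h_norm] using hasSum_one_div_nat_add_one_sq.summable)).symm
    _ = π ^ 2 / 6 := by
        simpa only [integral_exp_neg_pow_succ_div] using hasSum_one_div_nat_add_one_sq.tsum_eq
end

section
/- For every real a with -1 ≤ a, the three-term fixed-point identity holds: Li₂(-a/(1+√(1+a))) - Li₂(1/(1+√(1+a))) - (1/2)·Li₂(-a) + π²/12 - (1/2)·ln²(1+√(1+a)) = 0. -/
open Real MeasureTheory

noncomputable def Li2 (x : ℝ) : ℝ := -∫ t in (0:ℝ)..x, Real.log (1 - t) / t

/-!
With `s = √(1 + a) ≥ 0` we have `-a / (1 + s) = 1 - s` and `-a = 1 - s²`, so the left-hand side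
is `F s = Li₂(1 - s) - Li₂(1/(1 + s)) - ½ Li₂(1 - s²) + π²/12 - ½ log²(1 + s)`.
Since `Li₂'(x) = -log(1 - x)/x`, for `s > 0`
`F'(s) = log s · (1/(1 - s) - 1/(1 + s) - 2s/(1 - s²)) = 0`, so `F` is constant on `[0, ∞)`.
Finally `F 0 = π²/12 - ½ Li₂(1) = 0` by `Li₂(1) = ζ(2) = π²/6`, obtained by integrating
`-log(1 - t)/t = ∑ tⁿ/(n + 1)` term by term.
-/

open Set Topology

/- `log (1 - t) / t` with its removable singularity at `t = 0` filled in, rather than given the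
junk value `0 / 0 = 0`; unlike the integrand of `Li2` it is continuous on `{1}ᶜ`. -/
local notation "ℓ" => dslope (fun t : ℝ => Real.log (1 - t)) 0

lemma dslope_log_one_sub_of_ne {t : ℝ} (ht : t ≠ 0) : ℓ t = log (1 - t) / t := by
  simp [dslope_of_ne _ ht, slope_def_field]

lemma continuousOn_dslope_log_one_sub : ContinuousOn ℓ {1}ᶜ := by
  refine (continuousOn_dslope (isOpen_compl_singleton.mem_nhds (by norm_num))).2 ⟨?_, ?_⟩
  · intro t ht
    exact ((continuousAt_log (sub_ne_zero.2 (Ne.symm ht))).comp (by fun_prop)).continuousWithinAt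
  · fun_prop (disch := norm_num)

lemma intervalIntegrable_dslope_log_one_sub (a b : ℝ) : IntervalIntegrable ℓ volume a b := by
  suffices ∀ u, IntervalIntegrable ℓ volume u (1 / 2) from (this a).trans (this b).symm
  intro u
  rcases lt_or_ge u 1 with hu | hu
  · refine (continuousOn_dslope_log_one_sub.mono fun t ht => ?_).intervalIntegrable
    rw [mem_uIcc] at ht
    exact ne_of_lt (by rcases ht with ⟨-, h⟩ | ⟨-, h⟩ <;> linarith)
  -- away from `0` the logarithmic singularity at `1` is integrable because `log` is
  · have hpos : ∀ t ∈ uIcc u (1 / 2), 0 < t := fun t ht => by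
      rw [mem_uIcc] at ht
      rcases ht with ⟨h, -⟩ | ⟨h, -⟩ <;> linarith
    have hlog : IntervalIntegrable (fun t => log (1 - t)) volume u (1 / 2) := by
      simpa using intervalIntegral.intervalIntegrable_log'.comp_sub_left
        (a := 1 - u) (b := 1 - 1 / 2) 1
    refine (hlog.mul_continuousOn (continuousOn_inv₀.mono fun t ht => (hpos t ht).ne')).congr ?_
    intro t ht
    rw [dslope_log_one_sub_of_ne (hpos t (uIoc_subset_uIcc ht)).ne', div_eq_mul_inv]

lemma Li2_eq_neg_primitive : Li2 = fun x => -∫ t in (0:ℝ)..x, ℓ t := by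
  refine funext fun x => congrArg Neg.neg (intervalIntegral.integral_congr_ae ?_)
  filter_upwards [Measure.ae_ne volume 0] with t ht _ using (dslope_log_one_sub_of_ne ht).symm

@[fun_prop]
lemma continuous_Li2 : Continuous Li2 := by
  rw [Li2_eq_neg_primitive]
  exact (intervalIntegral.continuous_primitive intervalIntegrable_dslope_log_one_sub 0).neg

lemma hasDerivAt_Li2 {x : ℝ} (hx : x ≠ 1) : HasDerivAt Li2 (-ℓ x) x := by
  have hcont : ContinuousAt ℓ x :=
    continuousOn_dslope_log_one_sub.continuousAt (isOpen_compl_singleton.mem_nhds hx)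
  have hmeas : StronglyMeasurableAtFilter ℓ (𝓝 x) :=
    continuousOn_dslope_log_one_sub.stronglyMeasurableAtFilter isOpen_compl_singleton x hx
  rw [Li2_eq_neg_primitive]
  exact (intervalIntegral.integral_hasDerivAt_right (intervalIntegrable_dslope_log_one_sub 0 x)
    hmeas hcont).neg

lemma hasSum_pow_div_succ_neg_dslope {t : ℝ} (ht : |t| < 1) (ht0 : t ≠ 0) :
    HasSum (fun n : ℕ => t ^ n / (n + 1 : ℝ)) (-ℓ t) := by
  have hshift :
      (fun n : ℕ => t ^ n / (n + 1 : ℝ)) = fun n : ℕ => t ^ (n + 1) / (n + 1 : ℝ) / t :=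
    funext fun n => by rw [pow_succ]; field_simp
  rw [dslope_log_one_sub_of_ne ht0, ← neg_div, hshift]
  exact (hasSum_pow_div_log_of_abs_lt_one ht).div_const t

lemma integral_Ioo_pow_div_succ {x : ℝ} (hx : 0 ≤ x) (n : ℕ) :
    ∫ t in Ioo 0 x, t ^ n / (n + 1 : ℝ) = x ^ (n + 1) / (n + 1 : ℝ) ^ 2 := by
  rw [← integral_Ioc_eq_integral_Ioo, ← intervalIntegral.integral_of_le hx,
    intervalIntegral.integral_div, integral_pow, zero_pow n.succ_ne_zero, sub_zero, div_div, sq]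

lemma hasSum_Li2 {x : ℝ} (hx0 : 0 ≤ x) (hx1 : x ≤ 1) :
    HasSum (fun n : ℕ => x ^ (n + 1) / (n + 1 : ℝ) ^ 2) (Li2 x) := by
  have hsummable : Summable fun n : ℕ => x ^ (n + 1) / (n + 1 : ℝ) ^ 2 := by
    refine Summable.of_nonneg_of_le (fun n => by positivity) (fun n => ?_)
      ((summable_nat_add_iff 1).2 (summable_one_div_nat_pow.2 one_lt_two))
    push_cast
    gcongr
    exact pow_le_one₀ hx0 hx1
  have hsummable_norm :
      Summable fun n : ℕ => ∫ t in Ioo 0 x, ‖t ^ n / (n + 1 : ℝ)‖ := by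
    refine hsummable.congr fun n => ?_
    rw [← integral_Ioo_pow_div_succ hx0]
    refine setIntegral_congr_fun measurableSet_Ioo fun t ht => ?_
    have := ht.1.le
    exact (Real.norm_of_nonneg (by positivity)).symm
  have hint := hasSum_integral_of_summable_integral_norm
    (fun n => (Continuous.integrableOn_Icc (by fun_prop)).mono_set Ioo_subset_Icc_self)
    hsummable_norm
  have hLi2 : Li2 x = ∫ t in Ioo 0 x, -ℓ t := by
    simp only [Li2_eq_neg_primitive]
    rw [← intervalIntegral.integral_neg, intervalIntegral.integral_of_le hx0,
      integral_Ioc_eq_integral_Ioo]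
  have hseries : ∀ t ∈ Ioo 0 x, HasSum (fun n : ℕ => t ^ n / (n + 1 : ℝ)) (-ℓ t) :=
    fun t ht => hasSum_pow_div_succ_neg_dslope (by rw [abs_of_pos ht.1]; linarith [ht.2]) ht.1.ne'
  rw [hLi2, setIntegral_congr_fun measurableSet_Ioo fun t ht => (hseries t ht).tsum_eq.symm]
  simpa only [integral_Ioo_pow_div_succ hx0] using hint

lemma Li2_one : Li2 1 = π ^ 2 / 6 := by
  have hzeta : HasSum (fun n : ℕ => 1 / (n + 1 : ℝ) ^ 2) (π ^ 2 / 6) := by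
    simpa using (hasSum_nat_add_iff' 1).2 hasSum_zeta_two
  exact (hasSum_Li2 zero_le_one le_rfl).unique (by simpa using hzeta)

lemma dslope_log_one_sub_sub_mul_dslope {s : ℝ} (hs : 0 < s) :
    ℓ (1 - s) - s * ℓ (1 - s ^ 2) = log s / (1 + s) := by
  rcases eq_or_ne s 1 with rfl | hs1
  · simp
  have h1 : 1 - s ≠ 0 := sub_ne_zero.2 (Ne.symm hs1)
  have h2 : 1 - s ^ 2 ≠ 0 := by
    rw [show 1 - s ^ 2 = (1 - s) * (1 + s) by ring]
    exact mul_ne_zero h1 (by positivity)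
  rw [dslope_log_one_sub_of_ne h1, dslope_log_one_sub_of_ne h2, sub_sub_cancel, sub_sub_cancel,
    log_pow]
  field_simp
  ring

lemma dslope_log_one_sub_one_div_one_add {s : ℝ} (hs : 0 < s) :
    ℓ (1 / (1 + s)) = (log s - log (1 + s)) * (1 + s) := by
  rw [dslope_log_one_sub_of_ne (by positivity),
    show 1 - 1 / (1 + s) = s / (1 + s) by field_simp; ring, log_div hs.ne' (by positivity)]
  field_simp

noncomputable def fixedPointDefect (s : ℝ) : ℝ :=
  Li2 (1 - s) - Li2 (1 / (1 + s)) - (1/2) * Li2 (1 - s ^ 2) + π ^ 2 / 12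
    - (1/2) * (log (1 + s)) ^ 2

lemma fixedPointDefect_zero : fixedPointDefect 0 = 0 := by
  norm_num [fixedPointDefect, Li2_one]
  ring

lemma continuousOn_fixedPointDefect : ContinuousOn fixedPointDefect (Ici 0) := by
  intro s hs
  have : 1 + s ≠ 0 := (by linarith [mem_Ici.1 hs] : 0 < 1 + s).ne'
  unfold fixedPointDefect
  fun_prop (disch := assumption)

lemma hasDerivAt_fixedPointDefect {s : ℝ} (hs : 0 < s) : HasDerivAt fixedPointDefect 0 s := by
  have h1s : 1 + s ≠ 0 := by positivity
  have h1 : HasDerivAt (fun x : ℝ => 1 - x) (-1) s := by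
    simpa using (hasDerivAt_id' s).const_sub 1
  have h2 : HasDerivAt (fun x : ℝ => 1 / (1 + x)) (-1 / (1 + s) ^ 2) s :=
    ((hasDerivAt_const s 1).div ((hasDerivAt_id' s).const_add 1) h1s).congr_deriv (by ring)
  have h3 : HasDerivAt (fun x : ℝ => 1 - x ^ 2) (-(2 * s)) s := by
    simpa using (hasDerivAt_pow 2 s).const_sub 1
  have hinv : 1 / (1 + s) ≠ 1 := ((div_lt_one (by positivity)).2 (by linarith)).ne
  have hA := (hasDerivAt_Li2 (x := 1 - s) (by linarith)).comp s h1
  have hB := (hasDerivAt_Li2 hinv).comp s h2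
  have hC := (hasDerivAt_Li2 (x := 1 - s ^ 2) (by nlinarith)).comp s h3
  have hD := ((hasDerivAt_id' s).const_add 1).log h1s
  refine ((((hA.sub hB).sub (hC.const_mul (1 / 2))).add_const (π ^ 2 / 12)).sub
    ((hD.pow 2).const_mul (1 / 2))).congr_deriv ?_
  have hsub := dslope_log_one_sub_sub_mul_dslope hs
  rw [eq_div_iff h1s] at hsub
  rw [dslope_log_one_sub_one_div_one_add hs]
  field_simp
  norm_num
  linear_combination 2 * hsub

lemma fixedPointDefect_eq_zero {s : ℝ} (hs : 0 ≤ s) : fixedPointDefect s = 0 := by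
  rcases hs.eq_or_lt with rfl | hs
  · exact fixedPointDefect_zero
  obtain ⟨c, hc, hslope⟩ := exists_hasDerivAt_eq_slope fixedPointDefect (fun _ => 0) hs
    (continuousOn_fixedPointDefect.mono Icc_subset_Ici_self)
    fun x hx => hasDerivAt_fixedPointDefect hx.1
  rw [sub_zero, eq_comm, div_eq_zero_iff, sub_eq_zero, fixedPointDefect_zero] at hslope
  exact hslope.resolve_right hs.ne'

theorem fixed_point_identity (a : ℝ) (ha : -1 ≤ a) :
    Li2 (-a / (1 + Real.sqrt (1 + a))) - Li2 (1 / (1 + Real.sqrt (1 + a)))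
      - (1/2) * Li2 (-a) + Real.pi ^ 2 / 12
      - (1/2) * (Real.log (1 + Real.sqrt (1 + a))) ^ 2 = 0 := by
  obtain ⟨s, hs, rfl⟩ : ∃ s, 0 ≤ s ∧ a = s ^ 2 - 1 :=
    ⟨√(1 + a), sqrt_nonneg _, by rw [sq_sqrt (by linarith)]; ring⟩
  have hsqrt : √(1 + (s ^ 2 - 1)) = s := by rw [add_sub_cancel, sqrt_sq hs]
  have hneg : -(s ^ 2 - 1) = 1 - s ^ 2 := by ring
  have hdiv : (1 - s ^ 2) / (1 + s) = 1 - s := by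
    rw [div_eq_iff (by positivity)]
    ring
  rw [hsqrt, hneg, hdiv]
  exact fixedPointDefect_eq_zero hs
end

section
/- For every real s > 1, the improper integral ∫₀^∞ x^s · ln(1/(1 - e^{-x})) dx equals Γ(s+1)·ζ(s+2). -/
/-!
Expanding `-log (1 - e^{-x}) = ∑_{n ≥ 1} e^{-n x} / n` and integrating term by term
against `x ^ s` (all terms are nonnegative) gives
`∑_{n ≥ 1} Γ(s + 1) / n ^ (s + 2) = Γ(s + 1) ζ(s + 2)`.
In Mathlib's language this says that the Mellin transform of `-log (1 - e^{-t})` is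
`Γ(s) ζ(s + 1)`, which is an instance of the general "Mellin transform = Dirichlet series"
lemma `hasSum_mellin`.
-/

open Real MeasureTheory Set

lemma hasSum_one_div_mul_exp_neg_mul {t : ℝ} (ht : 0 < t) :
    HasSum (fun n : ℕ ↦ 1 / (n + 1 : ℝ) * exp (-(n + 1 : ℝ) * t))
      (-log (1 - exp (-t))) := by
  have h := hasSum_pow_div_log_of_abs_lt_one (x := exp (-t))
    (by rw [abs_of_pos (exp_pos _), exp_lt_one_iff]; linarith)
  convert h using 2 with n
  rw [← exp_nat_mul]
  push_cast
  ring_nf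

lemma mellin_ofReal (f : ℝ → ℝ) (s : ℝ) :
    mellin (fun t ↦ (f t : ℂ)) s = ((∫ t in Ioi 0, t ^ (s - 1) * f t : ℝ) : ℂ) := by
  rw [mellin, ← integral_complex_ofReal]
  refine setIntegral_congr_fun measurableSet_Ioi fun t (ht : 0 < t) ↦ ?_
  rw [smul_eq_mul, Complex.ofReal_mul, Complex.ofReal_cpow ht.le, Complex.ofReal_sub,
    Complex.ofReal_one]

lemma summable_norm_one_div_nat_add_one_div_rpow {s : ℝ} (hs : 0 < s) :
    Summable fun n : ℕ ↦ ‖1 / (n + 1 : ℂ)‖ / ((n : ℝ) + 1) ^ s := by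
  refine ((summable_one_div_nat_add_rpow 1 (s + 1)).mpr (by linarith)).congr fun n ↦ ?_
  have hn : (0 : ℝ) < n + 1 := n.cast_add_one_pos
  have hnorm : ‖(n + 1 : ℂ)‖ = n + 1 := by exact_mod_cast Complex.norm_natCast (n + 1)
  rw [abs_of_pos hn, rpow_add_one hn.ne', norm_div, norm_one, hnorm, div_div, mul_comm]

lemma mellin_neg_log_one_sub_exp_neg {s : ℂ} (hs : 0 < s.re) :
    mellin (fun t ↦ ((-log (1 - exp (-t)) : ℝ) : ℂ)) s =
      Complex.Gamma s * riemannZeta (s + 1) := by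
  have hsum := hasSum_mellin (a := fun n : ℕ ↦ 1 / (n + 1 : ℂ)) (p := fun n ↦ n + 1)
    (F := fun t ↦ ((-log (1 - exp (-t)) : ℝ) : ℂ)) (fun n ↦ Or.inr n.cast_add_one_pos) hs
    (fun t ht ↦ ?_) (summable_norm_one_div_nat_add_one_div_rpow hs)
  · rw [← hsum.tsum_eq, zeta_eq_tsum_one_div_nat_add_one_cpow (by simp; linarith),
      ← tsum_mul_left]
    refine tsum_congr fun n ↦ ?_
    have hn : (n + 1 : ℂ) ≠ 0 := by exact_mod_cast n.succ_ne_zero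
    push_cast
    rw [Complex.cpow_add _ _ hn, Complex.cpow_one]
    field_simp
  · convert Complex.hasSum_ofReal.mpr (hasSum_one_div_mul_exp_neg_mul ht) using 2 with n
    push_cast
    ring

lemma integral_rpow_mul_neg_log_one_sub_exp_neg {s : ℝ} (hs : -1 < s) :
    ∫ x in Ioi 0, x ^ s * -log (1 - exp (-x)) =
      Gamma (s + 1) * (riemannZeta ((s : ℂ) + 2)).re := by
  have h := congr_arg Complex.re <| mellin_neg_log_one_sub_exp_neg (s := ((s + 1 : ℝ) : ℂ))
    (by rw [Complex.ofReal_re]; linarith)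
  rw [mellin_ofReal, Complex.ofReal_re, add_sub_cancel_right, Complex.Gamma_ofReal,
    Complex.re_ofReal_mul] at h
  rw [h, Complex.ofReal_add, Complex.ofReal_one, add_assoc, one_add_one_eq_two]

theorem integral_pow_mul_log :
    ∀ s : ℝ, 1 < s →
      ∫ x in Set.Ioi (0:ℝ), x ^ s * Real.log (1 / (1 - Real.exp (-x)))
        = Real.Gamma (s + 1) * (riemannZeta ((s : ℂ) + 2)).re := by
  intro s hs
  simp_rw [one_div, log_inv]
  exact integral_rpow_mul_neg_log_one_sub_exp_neg (by linarith)
end
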